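/- arXiv:quant-ph/0505110 — 2 statements merged into one kernel-verified Lean document; each statement's English description precedes it below -/
import Mathlib

section
/- A channel Λ on the bipartite system A × B is A↛B semicausal if and only if it preserves the equivalence classes of states with equal B-marginal: for all states ρ and σ on A × B with Tr_A(ρ) = Tr_A(σ), one has Tr_A(Λ[ρ]) = Tr_A(Λ[σ]). -/
/-!
For `⇒`, feed both states through the replacement channel `X ↦ tr X • |a₀⟩⟨a₀|` on `A`:
`(Γ ⊗ id) ρ = |a₀⟩⟨a₀| ⊗ Tr_A ρ` depends only on the `B`-marginal, and semicausality says
`Λ` cannot tell `ρ` from `(Γ ⊗ id) ρ`. For `⇐`, `(Γ ⊗ id) ρ` is again a state, with the same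
`B`-marginal as `ρ`, because `Γ` preserves traces and `Γ ⊗ id` has Kraus operators `K i ⊗ 1`.
-/

open Matrix BigOperators
open scoped Kronecker ComplexOrder

noncomputable section

/-- Partial trace over the `A` factor. -/
def trA {A B : Type*} [Fintype A] (ρ : Matrix (A × B) (A × B) ℂ) : Matrix B B ℂ :=
  Matrix.of fun b b' => ∑ a, ρ (a, b) (a, b')

/-- Partial trace over the `B` factor. -/
def trB {A B : Type*} [Fintype B] (ρ : Matrix (A × B) (A × B) ℂ) : Matrix A A ℂ :=
  Matrix.of fun a a' => ∑ b, ρ (a, b) (a', b)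

/-- A state: positive semidefinite matrix of trace 1. -/
def IsState {n : Type*} [Fintype n] (ρ : Matrix n n ℂ) : Prop :=
  ρ.PosSemidef ∧ ρ.trace = 1

/-- A channel: a map admitting a Kraus representation `Λ[X] = ∑ i, K i * X * (K i)ᴴ`
with `∑ i, (K i)ᴴ * K i = 1` (completely positive and trace-preserving). -/
def IsChannel {n : Type*} [Fintype n] [DecidableEq n]
    (Λ : Matrix n n ℂ → Matrix n n ℂ) : Prop :=
  ∃ (m : ℕ) (K : Fin m → Matrix n n ℂ),
    (∀ X, Λ X = ∑ i, K i * X * (K i)ᴴ) ∧ (∑ i, (K i)ᴴ * K i = 1)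

/-- The induced map `Γ ⊗ id` on the bipartite system, acting blockwise. -/
def tensIdA {A B : Type*} (Γ : Matrix A A ℂ → Matrix A A ℂ)
    (ρ : Matrix (A × B) (A × B) ℂ) : Matrix (A × B) (A × B) ℂ :=
  Matrix.of fun p q => Γ (Matrix.of fun a a' => ρ (a, p.2) (a', q.2)) p.1 q.1

/-- The induced map `id ⊗ Γ` on the bipartite system, acting blockwise. -/
def tensIdB {A B : Type*} (Γ : Matrix B B ℂ → Matrix B B ℂ)
    (ρ : Matrix (A × B) (A × B) ℂ) : Matrix (A × B) (A × B) ℂ :=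
  Matrix.of fun p q => Γ (Matrix.of fun b b' => ρ (p.1, b) (q.1, b')) p.2 q.2

/-- `Λ` is A↛B semicausal: no channel applied by Alice beforehand affects Bob's
reduced output state. -/
def SemicausalAtoB {A B : Type*} [Fintype A] [Fintype B] [DecidableEq A]
    (Λ : Matrix (A × B) (A × B) ℂ → Matrix (A × B) (A × B) ℂ) : Prop :=
  ∀ ρ : Matrix (A × B) (A × B) ℂ, IsState ρ →
    ∀ Γ : Matrix A A ℂ → Matrix A A ℂ, IsChannel Γ →
      trA (Λ (tensIdA Γ ρ)) = trA (Λ ρ)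

/-- `Λ` is A↚B semicausal: no channel applied by Bob beforehand affects Alice's
reduced output state. -/
def SemicausalBtoA {A B : Type*} [Fintype A] [Fintype B] [DecidableEq B]
    (Λ : Matrix (A × B) (A × B) ℂ → Matrix (A × B) (A × B) ℂ) : Prop :=
  ∀ ρ : Matrix (A × B) (A × B) ℂ, IsState ρ →
    ∀ Γ : Matrix B B ℂ → Matrix B B ℂ, IsChannel Γ →
      trB (Λ (tensIdB Γ ρ)) = trB (Λ ρ)

/-- `Λ` is causal: both A↛B and A↚B semicausal. -/
def Causal {A B : Type*} [Fintype A] [Fintype B] [DecidableEq A] [DecidableEq B]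
    (Λ : Matrix (A × B) (A × B) ℂ → Matrix (A × B) (A × B) ℂ) : Prop :=
  SemicausalAtoB Λ ∧ SemicausalBtoA Λ

namespace IsChannel

variable {n : Type*} [Fintype n] [DecidableEq n]

theorem of_kraus {ι : Type*} [Fintype ι] (K : ι → Matrix n n ℂ) (hK : ∑ i, (K i)ᴴ * K i = 1) :
    IsChannel fun X => ∑ i, K i * X * (K i)ᴴ := by
  let e := Fintype.equivFin ι
  refine ⟨Fintype.card ι, K ∘ e.symm, fun X => ?_, ?_⟩
  · exact (e.symm.sum_comp fun i => K i * X * (K i)ᴴ).symm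
  · rw [← hK]
    exact e.symm.sum_comp fun i => (K i)ᴴ * K i

theorem trace_apply {Γ : Matrix n n ℂ → Matrix n n ℂ} (hΓ : IsChannel Γ) (X : Matrix n n ℂ) :
    (Γ X).trace = X.trace := by
  obtain ⟨m, K, hΓK, hK⟩ := hΓ
  calc (Γ X).trace = ∑ i, ((K i)ᴴ * K i * X).trace := by
        simp only [hΓK, trace_sum, trace_mul_cycle (K _)]
    _ = X.trace := by rw [← trace_sum, ← Finset.sum_mul, hK, one_mul]

end IsChannel

section PartialTrace

variable {A B : Type*} [Fintype A]

theorem trace_trA [Fintype B] (ρ : Matrix (A × B) (A × B) ℂ) : (trA ρ).trace = ρ.trace := by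
  simp only [trace, diag, trA, of_apply, Fintype.sum_prod_type]
  exact Finset.sum_comm

theorem tensIdA_kraus [Fintype B] [DecidableEq B] {ι : Type*} [Fintype ι] (K : ι → Matrix A A ℂ)
    (ρ : Matrix (A × B) (A × B) ℂ) :
    tensIdA (fun X => ∑ i, K i * X * (K i)ᴴ) ρ
      = ∑ i, (K i ⊗ₖ (1 : Matrix B B ℂ)) * ρ * (K i ⊗ₖ (1 : Matrix B B ℂ))ᴴ := by
  ext ⟨a, b⟩ ⟨a', b'⟩
  simp only [tensIdA, conjTranspose_kronecker, conjTranspose_one, of_apply, Matrix.sum_apply,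
    mul_apply, kroneckerMap_apply, one_apply, Fintype.sum_prod_type, mul_ite, ite_mul, mul_one,
    mul_zero, zero_mul, Finset.sum_ite_eq, Finset.sum_ite_eq', Finset.mem_univ, if_true,
    Finset.sum_mul]

variable [DecidableEq A] {Γ : Matrix A A ℂ → Matrix A A ℂ}

theorem IsChannel.trA_tensIdA (hΓ : IsChannel Γ) (ρ : Matrix (A × B) (A × B) ℂ) :
    trA (tensIdA Γ ρ) = trA ρ := by
  ext b b'
  simpa [trA, tensIdA, trace, diag] using hΓ.trace_apply (of fun a a' => ρ (a, b) (a', b'))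

theorem IsChannel.posSemidef_tensIdA [Fintype B] (hΓ : IsChannel Γ)
    {ρ : Matrix (A × B) (A × B) ℂ} (hρ : ρ.PosSemidef) : (tensIdA Γ ρ).PosSemidef := by
  classical
  obtain ⟨m, K, hΓK, -⟩ := hΓ
  obtain rfl : Γ = fun X => ∑ i, K i * X * (K i)ᴴ := funext hΓK
  rw [tensIdA_kraus]
  exact posSemidef_sum _ fun i _ => hρ.mul_mul_conjTranspose_same _

theorem IsState.tensIdA [Fintype B] {ρ : Matrix (A × B) (A × B) ℂ} (hρ : IsState ρ)
    (hΓ : IsChannel Γ) :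
    IsState (tensIdA Γ ρ) :=
  ⟨hΓ.posSemidef_tensIdA hρ.1, by rw [← trace_trA, hΓ.trA_tensIdA, trace_trA, hρ.2]⟩

end PartialTrace

def replaceChannel {A : Type*} [Fintype A] [DecidableEq A] (a₀ : A) (X : Matrix A A ℂ) :
    Matrix A A ℂ :=
  X.trace • single a₀ a₀ 1

theorem isChannel_replaceChannel {A : Type*} [Fintype A] [DecidableEq A] (a₀ : A) :
    IsChannel (replaceChannel a₀) := by
  convert IsChannel.of_kraus (fun a : A => single a₀ a (1 : ℂ)) ?_ using 1
  · ext1 X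
    simp [replaceChannel, trace, Finset.sum_smul, single_mul_mul_single]
  · simp [sum_single_one]

theorem tensIdA_replaceChannel {A B : Type*} [Fintype A] [DecidableEq A] (a₀ : A)
    (ρ : Matrix (A × B) (A × B) ℂ) :
    tensIdA (replaceChannel a₀) ρ = single a₀ a₀ 1 ⊗ₖ trA ρ := by
  ext ⟨a, b⟩ ⟨a', b'⟩
  simp [tensIdA, replaceChannel, trA, trace, mul_comm]

theorem stmt_6_general {A B : Type*} [Fintype A] [Fintype B] [DecidableEq A]
    [Nonempty A]
    (Λ : Matrix (A × B) (A × B) ℂ → Matrix (A × B) (A × B) ℂ) :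
    SemicausalAtoB Λ ↔
      ∀ ρ σ : Matrix (A × B) (A × B) ℂ, IsState ρ → IsState σ →
        trA ρ = trA σ → trA (Λ ρ) = trA (Λ σ) := by
  obtain ⟨a₀⟩ := ‹Nonempty A›
  constructor
  · intro hsemi ρ σ hρ hσ hρσ
    rw [← hsemi ρ hρ _ (isChannel_replaceChannel a₀), ← hsemi σ hσ _ (isChannel_replaceChannel a₀),
      tensIdA_replaceChannel, tensIdA_replaceChannel, hρσ]
  · intro hmarg ρ hρ Γ hΓ
    exact hmarg _ _ (hρ.tensIdA hΓ) hρ (hΓ.trA_tensIdA ρ)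

/-- a channel is A↛B semicausal iff it preserves the equivalence classes
of states with equal B-marginal. -/
theorem stmt_6 {A B : Type*} [Fintype A] [Fintype B] [DecidableEq A] [DecidableEq B]
    [Nonempty A] [Nonempty B]
    (Λ : Matrix (A × B) (A × B) ℂ → Matrix (A × B) (A × B) ℂ) (hΛ : IsChannel Λ) :
    SemicausalAtoB Λ ↔
      ∀ ρ σ : Matrix (A × B) (A × B) ℂ, IsState ρ → IsState σ →
        trA ρ = trA σ → trA (Λ ρ) = trA (Λ σ) :=
  stmt_6_general Λ
end
end

section
/- Let Λ be an A↛B semicausal channel on the bipartite system A × B, and let ρ_Choi = (id_{A'B'} ⊗ Λ)[P⁺_{AA'} ⊗ P⁺_{BB'}] be its Choi–Jamiołkowski state, where A' and B' are copies of A and B. Then the partial trace of ρ_Choi over the A factor equals (I_{A'}/|A|) ⊗ ρ_{BB'}, where ρ_{BB'} = (Λ_B ⊗ id_{B'})[P⁺_{BB'}] and Λ_B is the reduced channel Λ_B[σ] = Tr_A(Λ[(I_A/|A|) ⊗ σ]). -/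
open Matrix BigOperators
open scoped Kronecker ComplexOrder

noncomputable section

/-- The reduced map of `Λ` on `B`: `Λ_B[σ] = Tr_A(Λ[(I_A/|A|) ⊗ σ])`. -/
def redB {A B : Type*} [Fintype A] [Fintype B] [DecidableEq A]
    (Λ : Matrix (A × B) (A × B) ℂ → Matrix (A × B) (A × B) ℂ)
    (σ : Matrix B B ℂ) : Matrix B B ℂ :=
  trA (Λ ((((Fintype.card A : ℂ))⁻¹ • (1 : Matrix A A ℂ)) ⊗ₖ σ))

/-- The induced map `Λ ⊗ id` acting on the first factor of `n × C`. -/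
def lamTensId {n C : Type*} (Λ : Matrix n n ℂ → Matrix n n ℂ)
    (ρ : Matrix (n × C) (n × C) ℂ) : Matrix (n × C) (n × C) ℂ :=
  Matrix.of fun p q => Λ (Matrix.of fun i j => ρ (i, p.2) (j, q.2)) p.1 q.1

/-- The projector `P⁺` onto the maximally entangled vector
`|ψ⁺⟩ = (1/√|n|) ∑ i, |i⟩ ⊗ |i⟩` of `ℂ^n ⊗ ℂ^n`. -/
def maxEnt (n : Type*) [Fintype n] [DecidableEq n] : Matrix (n × n) (n × n) ℂ :=
  Matrix.of fun p q =>
    if p.1 = p.2 ∧ q.1 = q.2 then ((Fintype.card n : ℂ))⁻¹ else 0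

/-! Semicausality says that no channel applied on `A` before `Λ` changes `Tr_A ∘ Λ`. Since `Λ`
is linear and states span all matrices, the same holds on every input `X`. Choosing the
completely depolarizing channel on `A`, which turns `X` into `(I_A/|A|) ⊗ Tr_A X`, gives
`Tr_A Λ[X] = Λ_B[Tr_A X]`. The entries of the Choi state that enter the theorem come from the
`((a',b'),(c',d'))` block of `P⁺_{AA'} ⊗ P⁺_{BB'}`, whose partial trace over `A` is `δ_{a'c'}/|A|`
times the `(b',d')` block of `P⁺_{BB'}`. -/

theorem Matrix.vecMulVec_star_polarization {n : Type*} (u v : n → ℂ) :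
    (2 : ℂ) • vecMulVec u (star v)
      = vecMulVec (u + v) (star (u + v))
        + Complex.I • vecMulVec (u + Complex.I • v) (star (u + Complex.I • v))
        - (1 + Complex.I) • (vecMulVec u (star u) + vecMulVec v (star v)) := by
  ext i j
  simp only [smul_apply, add_apply, sub_apply, vecMulVec_apply, Pi.add_apply, Pi.star_apply,
    Pi.smul_apply, smul_eq_mul, star_add, star_mul', Complex.star_def, Complex.conj_I]
  linear_combination (u i * starRingEnd ℂ (v j) - v i * starRingEnd ℂ (u j)
    + Complex.I * v i * starRingEnd ℂ (v j)) * Complex.I_sq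

section States

variable {n : Type*} [Fintype n]

theorem Matrix.PosSemidef.mem_span_isState {M : Matrix n n ℂ} (hM : M.PosSemidef) :
    M ∈ Submodule.span ℂ {ρ : Matrix n n ℂ | IsState ρ} := by
  by_cases h0 : M.trace = 0
  · rw [hM.trace_eq_zero_iff.mp h0]
    exact zero_mem _
  · have hstate : IsState (M.trace⁻¹ • M) :=
      ⟨hM.smul (inv_nonneg_of_nonneg hM.trace_nonneg),
        by rw [trace_smul, smul_eq_mul, inv_mul_cancel₀ h0]⟩
    rw [← inv_smul_smul₀ (inv_ne_zero h0) M, inv_inv]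
    exact Submodule.smul_mem _ _ (Submodule.subset_span hstate)

theorem Matrix.eq_sum_vecMulVec_col {R : Type*} [Semiring R] [StarRing R] [DecidableEq n]
    (M : Matrix n n R) :
    M = ∑ j, vecMulVec (fun i => M i j) (star (Pi.single j 1)) := by
  ext i k
  simp [sum_apply, vecMulVec_apply, Pi.single_apply]

theorem span_isState_eq_top [DecidableEq n] :
    Submodule.span ℂ {ρ : Matrix n n ℂ | IsState ρ} = ⊤ := by
  set S := Submodule.span ℂ {ρ : Matrix n n ℂ | IsState ρ}
  have hself (w : n → ℂ) : vecMulVec w (star w) ∈ S :=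
    (posSemidef_vecMulVec_self_star w).mem_span_isState
  have hprod (u v : n → ℂ) : vecMulVec u (star v) ∈ S := by
    have h2 : (2 : ℂ) • vecMulVec u (star v) ∈ S := by
      rw [vecMulVec_star_polarization]
      exact sub_mem (add_mem (hself _) (S.smul_mem _ (hself _)))
        (S.smul_mem _ (add_mem (hself _) (hself _)))
    simpa [smul_smul] using S.smul_mem (2 : ℂ)⁻¹ h2
  refine eq_top_iff.mpr fun M _ => ?_
  rw [M.eq_sum_vecMulVec_col]
  exact sum_mem fun j _ => hprod _ _

end States

section Channels

variable {n : Type*} [Fintype n] [DecidableEq n]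

theorem isChannel_of_kraus {ι : Type*} [Fintype ι] {Λ : Matrix n n ℂ → Matrix n n ℂ}
    (K : ι → Matrix n n ℂ) (hΛ : ∀ X, Λ X = ∑ i, K i * X * (K i)ᴴ)
    (hK : ∑ i, (K i)ᴴ * K i = 1) : IsChannel Λ :=
  ⟨_, K ∘ (Fintype.equivFin ι).symm,
    fun X => by rw [hΛ]; exact (Equiv.sum_comp _ (fun i => K i * X * (K i)ᴴ)).symm,
    by rw [← hK]; exact Equiv.sum_comp _ (fun i => (K i)ᴴ * K i)⟩

theorem IsChannel.isLinearMap {Λ : Matrix n n ℂ → Matrix n n ℂ} (h : IsChannel Λ) :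
    IsLinearMap ℂ Λ := by
  obtain ⟨m, K, hΛ, -⟩ := h
  constructor <;> intros <;>
    simp only [hΛ, mul_add, add_mul, Finset.sum_add_distrib, Matrix.mul_smul,
      Matrix.smul_mul, Finset.smul_sum]

variable (n) in
def depolarize (X : Matrix n n ℂ) : Matrix n n ℂ :=
  X.trace • ((Fintype.card n : ℂ)⁻¹ • (1 : Matrix n n ℂ))

variable (n) in
theorem isChannel_depolarize [Nonempty n] : IsChannel (depolarize n) := by
  set c : ℂ := (((Real.sqrt (Fintype.card n : ℝ))⁻¹ : ℝ) : ℂ)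
  have hc : star c * c = (Fintype.card n : ℂ)⁻¹ := by
    rw [Complex.star_def, Complex.conj_ofReal, ← Complex.ofReal_mul, ← mul_inv,
      Real.mul_self_sqrt (Nat.cast_nonneg _)]
    push_cast; rfl
  have hoff {i j : n} (h : i ≠ j) (f : n → ℂ) : ∑ x, (if x = i ∧ x = j then f x else 0) = 0 :=
    Finset.sum_eq_zero fun x _ => if_neg fun hx => h (hx.1.symm.trans hx.2)
  refine isChannel_of_kraus (fun p : n × n => single p.1 p.2 c) (fun X => ?_) ?_
  · have hterm (x : ℂ) : c * x * star c = x * (Fintype.card n : ℂ)⁻¹ := by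
      rw [← hc]; ring
    ext i j
    simp only [conjTranspose_single, single_mul_mul_single, hterm, Matrix.sum_apply,
      Fintype.sum_prod_type, depolarize, Matrix.smul_apply, one_apply, single_apply]
    by_cases h : i = j
    · subst h
      simp [trace, Finset.sum_mul]
    · simp [h, hoff h]
  · ext i j
    simp only [conjTranspose_single, single_mul_single_same, hc, Matrix.sum_apply,
      Fintype.sum_prod_type, one_apply, single_apply]
    by_cases h : i = j
    · subst h
      simp [Fintype.card_ne_zero]
    · simp [h, hoff h]

end Channels

theorem IsLinearMap.tensIdA {A B : Type*} {Γ : Matrix A A ℂ → Matrix A A ℂ}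
    (hΓ : IsLinearMap ℂ Γ) : IsLinearMap ℂ (tensIdA (B := B) Γ) := by
  constructor
  · intro X Y
    ext p q
    exact congr_fun₂ (hΓ.map_add (Matrix.of fun a a' => X (a, p.2) (a', q.2))
      (Matrix.of fun a a' => Y (a, p.2) (a', q.2))) p.1 q.1
  · intro s X
    ext p q
    exact congr_fun₂ (hΓ.map_smul s (Matrix.of fun a a' => X (a, p.2) (a', q.2))) p.1 q.1

section PartialTrace

variable {A B : Type*} [Fintype A]

theorem isLinearMap_trA : IsLinearMap ℂ (trA : Matrix (A × B) (A × B) ℂ → Matrix B B ℂ) := by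
  constructor <;> intros <;> ext <;> simp [trA, Finset.sum_add_distrib, Finset.mul_sum]

theorem trA_single [DecidableEq A] [DecidableEq B] (a a' : A) (b b' : B) (c : ℂ) :
    trA (single (a, b) (a', b') c) = if a = a' then single b b' c else 0 := by
  ext x y
  simp only [trA, single_apply, of_apply, Prod.mk.injEq]
  split_ifs with h
  · subst h
    simp [single_apply, ite_and]
  · exact Finset.sum_eq_zero fun z _ => if_neg fun hz => h (hz.1.1.trans hz.2.1.symm)

theorem tensIdA_depolarize [DecidableEq A] (X : Matrix (A × B) (A × B) ℂ) :
    tensIdA (depolarize A) X = ((Fintype.card A : ℂ)⁻¹ • (1 : Matrix A A ℂ)) ⊗ₖ trA X := by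
  ext p q
  simp only [tensIdA, depolarize, trA, trace, kroneckerMap_apply, Matrix.smul_apply, one_apply,
    of_apply, diag_apply, smul_eq_mul]
  ring

theorem redB_smul [Fintype B] [DecidableEq A] {Λ : Matrix (A × B) (A × B) ℂ → Matrix (A × B) (A × B) ℂ}
    (hΛ : IsLinearMap ℂ Λ) (s : ℂ) (σ : Matrix B B ℂ) :
    redB Λ (s • σ) = s • redB Λ σ := by
  rw [redB, redB, kronecker_smul, hΛ.map_smul, isLinearMap_trA.map_smul]

end PartialTrace

namespace SemicausalAtoB

variable {A B : Type*} [Fintype A] [Fintype B] [DecidableEq A] [DecidableEq B]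
  {Λ : Matrix (A × B) (A × B) ℂ → Matrix (A × B) (A × B) ℂ}

theorem trA_map_tensIdA (hΛ : IsChannel Λ) (hsc : SemicausalAtoB Λ)
    {Γ : Matrix A A ℂ → Matrix A A ℂ} (hΓ : IsChannel Γ) (X : Matrix (A × B) (A × B) ℂ) :
    trA (Λ (tensIdA Γ X)) = trA (Λ X) := by
  let L := isLinearMap_trA.mk' _ ∘ₗ hΛ.isLinearMap.mk' _
  have hL : L ∘ₗ hΓ.isLinearMap.tensIdA.mk' _ = L :=
    LinearMap.ext_on span_isState_eq_top fun ρ hρ => hsc ρ hρ Γ hΓ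
  exact LinearMap.congr_fun hL X

theorem trA_map_eq_redB_trA [Nonempty A] (hΛ : IsChannel Λ) (hsc : SemicausalAtoB Λ)
    (X : Matrix (A × B) (A × B) ℂ) : trA (Λ X) = redB Λ (trA X) := by
  rw [redB, ← tensIdA_depolarize, hsc.trA_map_tensIdA hΛ (isChannel_depolarize A)]

end SemicausalAtoB

theorem maxEnt_block (n : Type*) [Fintype n] [DecidableEq n] (i j : n) :
    (Matrix.of fun k l => maxEnt n (k, i) (l, j)) = (Fintype.card n : ℂ)⁻¹ • single i j 1 := by
  ext k l
  by_cases hk : k = i <;> by_cases hl : l = j <;> simp [maxEnt, single_apply, hk, hl, eq_comm]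

theorem stmt_9_general {A B : Type*} [Fintype A] [Fintype B] [DecidableEq A] [DecidableEq B]
    (Λ : Matrix (A × B) (A × B) ℂ → Matrix (A × B) (A × B) ℂ)
    (hΛ : IsChannel Λ) (hsc : SemicausalAtoB Λ) :
    ∀ (a' c' : A) (b b' d d' : B),
      ∑ a : A, lamTensId Λ (maxEnt (A × B)) ((a, b), (a', b')) ((a, d), (c', d'))
        = (if a' = c' then ((Fintype.card A : ℂ))⁻¹ else 0)
            * lamTensId (redB Λ) (maxEnt B) (b, b') (d, d') := by
  intro a' c' b b' d d'
  have : Nonempty A := ⟨a'⟩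
  have htrA_block : trA ((Fintype.card (A × B) : ℂ)⁻¹ • single (a', b') (c', d') (1 : ℂ))
      = (if a' = c' then ((Fintype.card A : ℂ))⁻¹ else 0) •
          ((Fintype.card B : ℂ)⁻¹ • single b' d' (1 : ℂ)) := by
    rw [isLinearMap_trA.map_smul, trA_single, Fintype.card_prod]
    split_ifs <;> simp [mul_comm]
  calc ∑ a : A, lamTensId Λ (maxEnt (A × B)) ((a, b), (a', b')) ((a, d), (c', d'))
      = trA (Λ ((Fintype.card (A × B) : ℂ)⁻¹ • single (a', b') (c', d') 1)) b d := by
        rw [← maxEnt_block]; rfl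
    _ = (if a' = c' then ((Fintype.card A : ℂ))⁻¹ else 0)
          * redB Λ ((Fintype.card B : ℂ)⁻¹ • single b' d' 1) b d := by
        rw [hsc.trA_map_eq_redB_trA hΛ, htrA_block, redB_smul hΛ.isLinearMap]; rfl
    _ = _ := by rw [← maxEnt_block]; rfl

/-- the Choi–Jamiołkowski state of an A↛B semicausal channel `Λ`,
`ρ_Choi = (Λ_{AB} ⊗ id_{A'B'})[P⁺_{AA'} ⊗ P⁺_{BB'}]`, has its partial trace over the
`A` factor equal to `(I_{A'}/|A|) ⊗ ρ_{BB'}` where `ρ_{BB'} = (Λ_B ⊗ id_{B'})[P⁺_{BB'}]`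
and `Λ_B` is the reduced channel (stated entrywise; the row/column indices of the Choi
state are of the form `((a,b),(a',b'))` with `(a,b)` on system `AB` and `(a',b')` on
the copy `A'B'`). -/
theorem stmt_9 {A B : Type*} [Fintype A] [Fintype B] [DecidableEq A] [DecidableEq B]
    [Nonempty A] [Nonempty B]
    (Λ : Matrix (A × B) (A × B) ℂ → Matrix (A × B) (A × B) ℂ)
    (hΛ : IsChannel Λ) (hsc : SemicausalAtoB Λ) :
    ∀ (a' c' : A) (b b' d d' : B),
      ∑ a : A, lamTensId Λ (maxEnt (A × B)) ((a, b), (a', b')) ((a, d), (c', d'))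
        = (if a' = c' then ((Fintype.card A : ℂ))⁻¹ else 0)
            * lamTensId (redB Λ) (maxEnt B) (b, b') (d, d') :=
  stmt_9_general Λ hΛ hsc
end
end
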